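/- Under the merging setup, if p ∈ SKY_𝒟(R̃''') and p.D_i ∉ {v_1,…,v_{x-1}}, then p ∈ SKY_𝒟(R̃''). -/

import Mathlib

/-! A point dominating `p` for `R''` also dominates it for `R'''`: on dimension `i`,
`u ≺'' p.D_i` forces `u = v_x` and `p.D_i ≠ v_x`, so `p.D_i` avoids every `v_a` and
`v_x ≺''' p.D_i`. -/

/-- A point `p` dominates a point `q` with respect to the preference `R`:
`p.D_i ⪯_i q.D_i` for every dimension `i` and `p.D_i ≺_i q.D_i` for some dimension. -/
def dominates {m : ℕ} {D : Fin m → Type*} (R : ∀ i, D i → D i → Prop)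
    (p q : ∀ i, D i) : Prop :=
  (∀ i, p i = q i ∨ R i (p i) (q i)) ∧ ∃ i, R i (p i) (q i)

/-- The skyline of the dataset `𝒟` with respect to the preference `R`:
the points of `𝒟` dominated by no point of `𝒟`. -/
def skyline {m : ℕ} {D : Fin m → Type*} (𝒟 : Set (∀ i, D i))
    (R : ∀ i, D i → D i → Prop) : Set (∀ i, D i) :=
  {p ∈ 𝒟 | ∀ q ∈ 𝒟, ¬ dominates R q p}

/-- The `x`-th order implicit preference `v 0 ≺ v 1 ≺ ... ≺ v (x-1) ≺ *`:
`u P w` iff `u = v a` for some `a` and `w ∉ {v 0, …, v a}`. -/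
def implicitPref {D : Type*} {x : ℕ} (v : Fin x → D) : D → D → Prop :=
  fun u w => ∃ a : Fin x, u = v a ∧ ∀ b : Fin x, b ≤ a → w ≠ v b

theorem dominates.mono {m : ℕ} {D : Fin m → Type*} {R S : ∀ i, D i → D i → Prop}
    {p q : ∀ i, D i} (h : ∀ j, R j (p j) (q j) → S j (p j) (q j)) (hpq : dominates R p q) :
    dominates S p q :=
  ⟨fun j => (hpq.1 j).imp_right (h j), hpq.2.imp h⟩

theorem mem_skyline_of_imp {m : ℕ} {D : Fin m → Type*} {𝒟 : Set (∀ i, D i)}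
    {R S : ∀ i, D i → D i → Prop} {p : ∀ i, D i} (h : ∀ j u, R j u (p j) → S j u (p j))
    (hp : p ∈ skyline 𝒟 S) : p ∈ skyline 𝒟 R :=
  ⟨hp.1, fun q hq hqp => hp.2 q hq (hqp.mono fun j => h j (q j))⟩

theorem implicitPref_const_one {D : Type*} {c u w : D} :
    implicitPref (fun _ : Fin 1 => c) u w ↔ u = c ∧ w ≠ c := by
  simp [implicitPref]

theorem implicitPref_of_forall_ne {D : Type*} {x : ℕ} {v : Fin x → D} (a : Fin x) {w : D}
    (hw : ∀ b, w ≠ v b) : implicitPref v (v a) w :=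
  ⟨a, rfl, fun b _ => hw b⟩

theorem merging_mem_second_general {m : ℕ} {D : Fin m → Type*}
    (𝒟 : Set (∀ j, D j)) (i : Fin m)
    (k : ℕ) (v : Fin (k + 1) → D i)
    (R' R'' R''' : ∀ j, D j → D j → Prop)
    (hagree : ∀ j, j ≠ i → R' j = R'' j ∧ R' j = R''' j)
    (hi'' : R'' i = implicitPref (fun _ : Fin 1 => v (Fin.last k)))
    (hi''' : R''' i = implicitPref v)
    (p : ∀ j, D j) (hp : p ∈ skyline 𝒟 R''')
    (hpi : ∀ a : Fin k, p i ≠ v a.castSucc) :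
    p ∈ skyline 𝒟 R'' := by
  refine mem_skyline_of_imp (fun j u hu => ?_) hp
  by_cases hji : j = i
  · subst hji
    rw [hi'', implicitPref_const_one] at hu
    obtain ⟨rfl, hlast⟩ := hu
    rw [hi''']
    exact implicitPref_of_forall_ne _ (Fin.forall_fin_succ'.2 ⟨hpi, hlast⟩)
  · obtain ⟨h'', h'''⟩ := hagree j hji
    rwa [← h''', h'']

/-- if `p ∈ SKY(R''')` and `p.D_i ∉ {v 0, …, v (k-1)}`
then `p ∈ SKY(R'')`. -/
theorem merging_mem_second {m : ℕ} (hm : 1 ≤ m) {D : Fin m → Type*}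
    (𝒟 : Set (∀ j, D j)) (i : Fin m)
    (k : ℕ) (hk : 1 ≤ k) (v : Fin (k + 1) → D i) (hv : Function.Injective v)
    (R' R'' R''' : ∀ j, D j → D j → Prop)
    (hpo' : ∀ j, (∀ u : D j, ¬ R' j u u) ∧
      (∀ u w z : D j, R' j u w → R' j w z → R' j u z))
    (hpo'' : ∀ j, (∀ u : D j, ¬ R'' j u u) ∧
      (∀ u w z : D j, R'' j u w → R'' j w z → R'' j u z))
    (hpo''' : ∀ j, (∀ u : D j, ¬ R''' j u u) ∧
      (∀ u w z : D j, R''' j u w → R''' j w z → R''' j u z))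
    (hagree : ∀ j, j ≠ i → R' j = R'' j ∧ R' j = R''' j)
    (hi' : R' i = implicitPref (fun a : Fin k => v a.castSucc))
    (hi'' : R'' i = implicitPref (fun _ : Fin 1 => v (Fin.last k)))
    (hi''' : R''' i = implicitPref v)
    (p : ∀ j, D j) (hp : p ∈ skyline 𝒟 R''')
    (hpi : ∀ a : Fin k, p i ≠ v a.castSucc) :
    p ∈ skyline 𝒟 R'' :=
  merging_mem_second_general 𝒟 i k v R' R'' R''' hagree hi'' hi''' p hp hpi
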